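/- arXiv:2102.12834 — 2 statements merged into one kernel-verified Lean document; each statement's English description precedes it below -/
import Mathlib

section
/- If (x*, o*) is an endemic equilibrium of the coupled epidemic–opinion model (i.e., x* ≥ 0 and x* ≠ 0), then x* is strictly interior: 0 ≪ x* ≪ e (every entry of x* lies strictly between 0 and 1) and −0.5e ≪ o* ≪ 0.5e (every entry of o* lies strictly between −0.5 and 0.5). -/
open Matrix Filter Set

noncomputable section

/-- The modified sign function: `1` if `0 ≤ x`, `-1` otherwise. -/
def sgnm (x : ℝ) : ℝ := if 0 ≤ x then 1 else -1

/-- Gauge transformation matrix `Φ(o) = diag(sgnm o₁, …, sgnm oₙ)`. -/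
def gaugeMat {n : ℕ} (o : Fin n → ℝ) : Matrix (Fin n) (Fin n) ℝ :=
  Matrix.diagonal fun i => sgnm (o i)

/-- Graph Laplacian of a nonnegative adjacency matrix with zero diagonal. -/
def lapOf {n : ℕ} (A : Matrix (Fin n) (Fin n) ℝ) : Matrix (Fin n) (Fin n) ℝ :=
  Matrix.diagonal (fun i => ∑ j, A i j) - A

/-- Irreducibility of a (nonnegative) matrix: between any two indices some power
has a strictly positive entry. -/
def MatIrreducible {n : ℕ} (M : Matrix (Fin n) (Fin n) ℝ) : Prop :=
  ∀ i j : Fin n, ∃ k : ℕ, 1 ≤ k ∧ 0 < (M ^ k) i j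

/-- Spectral radius of a real square matrix, as the largest modulus of a complex
eigenvalue. -/
def specRad {m : Type*} [Fintype m] [DecidableEq m] (A : Matrix m m ℝ) : ℝ :=
  sSup ((fun z : ℂ => ‖z‖) '' spectrum ℂ (A.map (algebraMap ℝ ℂ)))

/-- Spectral abscissa of a real square matrix, as the largest real part of a
complex eigenvalue. -/
def specAbs {m : Type*} [Fintype m] [DecidableEq m] (A : Matrix m m ℝ) : ℝ :=
  sSup (Complex.re '' spectrum ℂ (A.map (algebraMap ℝ ℂ)))

/-- A real square matrix is Hurwitz if all its (complex) eigenvalues have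
negative real part. -/
def IsHurwitz {m : Type*} [Fintype m] [DecidableEq m] (A : Matrix m m ℝ) : Prop :=
  ∀ z ∈ spectrum ℂ (A.map (algebraMap ℝ ℂ)), z.re < 0

/-- The data of the coupled networked SIS epidemic–opinion model over `n`
communities. -/
structure EpiOpModel (n : ℕ) where
  /-- healing rates -/
  δ : Fin n → ℝ
  /-- minimum healing rate -/
  δmin : ℝ
  /-- minimum infection rate -/
  βmin : ℝ
  /-- unweighted adjacency matrix `Ã` of the (strongly connected) epidemic graph -/
  Atil : Matrix (Fin n) (Fin n) ℝ
  /-- infection matrix `B = [β_ij]` -/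
  B : Matrix (Fin n) (Fin n) ℝ
  /-- nonnegative adjacency matrix `Ā_u` of the (strongly connected) opinion graph -/
  Au : Matrix (Fin n) (Fin n) ℝ
  δmin_pos : 0 < δmin
  δ_ge : ∀ i, δmin ≤ δ i
  βmin_pos : 0 < βmin
  Atil_01 : ∀ i j, Atil i j = 0 ∨ Atil i j = 1
  Atil_diag : ∀ i, Atil i i = 0
  B_edge : ∀ i j, Atil i j = 1 → βmin ≤ B i j
  B_off : ∀ i j, Atil i j = 0 → B i j = 0
  B_irred : MatIrreducible B
  Au_nonneg : ∀ i j, 0 ≤ Au i j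
  Au_diag : ∀ i, Au i i = 0
  Au_irred : MatIrreducible Au

namespace EpiOpModel

/-- The state space `[0,1]^n × [−0.5, 0.5]^n`. -/
def InBox {n : ℕ} (_M : EpiOpModel n) (x o : Fin n → ℝ) : Prop :=
  (∀ i, x i ∈ Set.Icc (0:ℝ) 1) ∧ (∀ i, o i ∈ Set.Icc (-(1/2) : ℝ) (1/2))

variable {n : ℕ} (M : EpiOpModel n)

/-- `B_min = β_min Ã`. -/
def Bmin : Matrix (Fin n) (Fin n) ℝ := M.βmin • M.Atil

/-- `D = diag(δ₁, …, δₙ)`. -/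
def Dmax : Matrix (Fin n) (Fin n) ℝ := Matrix.diagonal M.δ

/-- `D_min = δ_min I`. -/
def Dmin : Matrix (Fin n) (Fin n) ℝ := M.δmin • (1 : Matrix (Fin n) (Fin n) ℝ)

/-- Opinion-dependent healing matrix `D(o) = D_min + (D − D_min)(O + 0.5 I)`. -/
def Dmat (o : Fin n → ℝ) : Matrix (Fin n) (Fin n) ℝ :=
  Matrix.diagonal fun i => M.δmin + (M.δ i - M.δmin) * (o i + 1/2)

/-- Opinion-dependent infection matrix `B(o) = B − (O + 0.5 I)(B − B_min)`. -/
def Bmat (o : Fin n → ℝ) : Matrix (Fin n) (Fin n) ℝ :=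
  Matrix.of fun i j => M.B i j - (o i + 1/2) * (M.B i j - M.Bmin i j)

/-- Laplacian `L̄_u` of the opinion adjacency matrix. -/
def Lu : Matrix (Fin n) (Fin n) ℝ := lapOf M.Au

/-- Signed opinion Laplacian `Φ(o) L̄_u Φ(o)`. -/
def Lsgn (o : Fin n → ℝ) : Matrix (Fin n) (Fin n) ℝ :=
  gaugeMat o * M.Lu * gaugeMat o

/-- Epidemic vector field `ẋ = −D(o)x + (I − X)B(o)x`. -/
def fx (x o : Fin n → ℝ) : Fin n → ℝ :=
  -(M.Dmat o).mulVec x +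
    (Matrix.diagonal fun i => 1 - x i).mulVec ((M.Bmat o).mulVec x)

/-- Opinion vector field `ȯ = x − (Φ(o) L̄_u Φ(o) + I) o − 0.5 e`. -/
def fo (x o : Fin n → ℝ) : Fin n → ℝ :=
  x - (M.Lsgn o + 1).mulVec o - (fun _ => (1/2 : ℝ))

/-- Equilibria of the coupled system. -/
def IsEquilibrium (x o : Fin n → ℝ) : Prop := M.fx x o = 0 ∧ M.fo x o = 0

/-- Trajectories (solutions) of the coupled system. -/
def IsTrajectory (x o : ℝ → Fin n → ℝ) : Prop :=
  ∀ t : ℝ, ∀ i : Fin n,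
    HasDerivAt (fun s => x s i) (M.fx (x t) (o t) i) t ∧
    HasDerivAt (fun s => o s i) (M.fo (x t) (o t) i) t

/-- The Opinion-Dependent Reproduction Number `R^o = ρ(D(o)⁻¹ B(o))`. -/
def Rnum (o : Fin n → ℝ) : ℝ := specRad ((M.Dmat o)⁻¹ * M.Bmat o)

/-- `R_max = ρ(D_min⁻¹ B)`. -/
def Rmax : ℝ := specRad (M.Dmin⁻¹ * M.B)

/-- `R_min = ρ(D⁻¹ B_min)`. -/
def Rmin : ℝ := specRad (M.Dmax⁻¹ * M.Bmin)

/-- `W(o) = −D(o) + B(o)`. -/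
def Wmat (o : Fin n → ℝ) : Matrix (Fin n) (Fin n) ℝ := -(M.Dmat o) + M.Bmat o

/-- Jacobian matrix of the coupled system evaluated at a healthy equilibrium
`(0, o)`: block lower triangular with diagonal blocks `W(o)` and
`−(Φ(o) L̄_u Φ(o) + I)`. -/
def JacHealthy (o : Fin n → ℝ) : Matrix (Fin n ⊕ Fin n) (Fin n ⊕ Fin n) ℝ :=
  Matrix.fromBlocks (M.Wmat o) 0 1 (-(M.Lsgn o + 1))

/-- Lyapunov stability of an equilibrium of the coupled system. -/
def LyapunovStable (xe oe : Fin n → ℝ) : Prop :=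
  ∀ ε > 0, ∃ δ > 0, ∀ x o : ℝ → Fin n → ℝ, M.IsTrajectory x o →
    dist (x 0, o 0) (xe, oe) < δ → ∀ t ≥ 0, dist (x t, o t) (xe, oe) < ε

/-- Local exponential stability of an equilibrium of the coupled system. -/
def LocExpStable (xe oe : Fin n → ℝ) : Prop :=
  ∃ δ > 0, ∃ C > 0, ∃ α > 0, ∀ x o : ℝ → Fin n → ℝ, M.IsTrajectory x o →
    dist (x 0, o 0) (xe, oe) < δ →
    ∀ t ≥ 0, dist (x t, o t) (xe, oe) ≤
      C * Real.exp (-α * t) * dist (x 0, o 0) (xe, oe)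

end EpiOpModel

/- At an endemic equilibrium the zero set of `x` is closed under the edges of the infection graph
(a healthy community has only healthy neighbours, since `B(o)` keeps the support of `B`), so by
irreducibility `x ≫ 0`; and `x_i = 1` would leave only the healing term `-δ_i(o)` in the
`i`-th equation. For the opinions, `Φ(o) L̄_u Φ(o) o = Φ(o) L̄_u |o|`, and `(L̄_u |o|)_i ≥ 0`
whenever `|o_i| = 1/2` is maximal; the `i`-th opinion equation then forces `x_i ≥ 1` at
`o_i = 1/2` and `x_i ≤ 0` at `o_i = -1/2`. -/

namespace Matrix

variable {ι R : Type*}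

theorem IsIrreducible.forall_of_closed [Ring R] [LinearOrder R] {A : Matrix ι ι R}
    (hA : A.IsIrreducible) {P : ι → Prop} (hP : ∀ i j, P i → 0 < A i j → P j) {i : ι}
    (hi : P i) (j : ι) : P j := by
  let := toQuiver A
  obtain ⟨p, -⟩ := hA.connected i j
  induction p with
  | nil => exact hi
  | cons _ e ih => exact hP _ _ ih e.down

end Matrix

theorem lapOf_mulVec_apply {n : ℕ} (A : Matrix (Fin n) (Fin n) ℝ) (v : Fin n → ℝ) (i : Fin n) :
    (lapOf A *ᵥ v) i = ∑ j, A i j * (v i - v j) := by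
  rw [lapOf, sub_mulVec, Pi.sub_apply, mulVec_diagonal, mulVec, dotProduct, Finset.sum_mul,
    ← Finset.sum_sub_distrib]
  exact Finset.sum_congr rfl fun j _ => by ring

theorem lapOf_mulVec_apply_nonneg {n : ℕ} {A : Matrix (Fin n) (Fin n) ℝ}
    (hA : ∀ i j, 0 ≤ A i j) {v : Fin n → ℝ} {i : Fin n} (hv : ∀ j, v j ≤ v i) :
    0 ≤ (lapOf A *ᵥ v) i := by
  rw [lapOf_mulVec_apply]
  exact Finset.sum_nonneg fun j _ => mul_nonneg (hA i j) (sub_nonneg.2 (hv j))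

theorem MatIrreducible.isIrreducible {n : ℕ} {A : Matrix (Fin n) (Fin n) ℝ}
    (hA : MatIrreducible A) (hA₀ : ∀ i j, 0 ≤ A i j) : A.IsIrreducible :=
  (isIrreducible_iff_exists_pow_pos hA₀).2 fun i j => hA i j

theorem sgnm_mul_self (t : ℝ) : sgnm t * t = |t| := by
  unfold sgnm
  split_ifs with h
  · rw [abs_of_nonneg h, one_mul]
  · rw [abs_of_neg (not_le.mp h), neg_one_mul]

theorem gaugeMat_mulVec_self {n : ℕ} (o : Fin n → ℝ) : gaugeMat o *ᵥ o = |o| := by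
  ext i
  rw [gaugeMat, mulVec_diagonal, sgnm_mul_self, Pi.abs_apply]

namespace EpiOpModel

variable {n : ℕ} (M : EpiOpModel n) {x o : Fin n → ℝ} {i j : Fin n}

theorem Bmin_apply_nonneg (i j : Fin n) : 0 ≤ M.Bmin i j := by
  rcases M.Atil_01 i j with h | h <;> simp [Bmin, h, M.βmin_pos.le]

theorem Bmin_apply_le_B_apply (i j : Fin n) : M.Bmin i j ≤ M.B i j := by
  rcases M.Atil_01 i j with h | h
  · simp [Bmin, h, M.B_off i j h]
  · simpa [Bmin, h] using M.B_edge i j h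

theorem Bmin_apply_pos_of_B_apply_pos (h : 0 < M.B i j) : 0 < M.Bmin i j := by
  rcases M.Atil_01 i j with hA | hA
  · exact absurd (M.B_off i j hA) h.ne'
  · simpa [Bmin, hA] using M.βmin_pos

theorem B_apply_nonneg (i j : Fin n) : 0 ≤ M.B i j :=
  (M.Bmin_apply_nonneg i j).trans (M.Bmin_apply_le_B_apply i j)

theorem B_isIrreducible : M.B.IsIrreducible :=
  M.B_irred.isIrreducible M.B_apply_nonneg

theorem Bmat_apply (o : Fin n → ℝ) (i j : Fin n) :
    M.Bmat o i j = M.Bmin i j + (1/2 - o i) * (M.B i j - M.Bmin i j) := by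
  rw [Bmat, of_apply]
  ring

theorem Bmin_apply_le_Bmat_apply (ho : o i ≤ 1/2) (j : Fin n) : M.Bmin i j ≤ M.Bmat o i j := by
  rw [Bmat_apply, le_add_iff_nonneg_right]
  exact mul_nonneg (by linarith) (sub_nonneg.2 (M.Bmin_apply_le_B_apply i j))

theorem Dmat_apply_self_pos (ho : -(1/2) ≤ o i) : 0 < M.Dmat o i i := by
  rw [Dmat, diagonal_apply_eq]
  exact add_pos_of_pos_of_nonneg M.δmin_pos
    (mul_nonneg (sub_nonneg.2 (M.δ_ge i)) (by linarith))

theorem fx_apply (x o : Fin n → ℝ) (i : Fin n) :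
    M.fx x o i = -(M.Dmat o i i * x i) + (1 - x i) * (M.Bmat o *ᵥ x) i := by
  rw [fx, Dmat, Pi.add_apply, Pi.neg_apply, mulVec_diagonal, mulVec_diagonal,
    diagonal_apply_eq]

theorem Lsgn_mulVec_self (o : Fin n → ℝ) :
    M.Lsgn o *ᵥ o = gaugeMat o *ᵥ (M.Lu *ᵥ |o|) := by
  rw [Lsgn, ← mulVec_mulVec, ← mulVec_mulVec, gaugeMat_mulVec_self]

theorem fo_apply (x o : Fin n → ℝ) (i : Fin n) :
    M.fo x o i = x i - sgnm (o i) * (M.Lu *ᵥ |o|) i - o i - 1/2 := by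
  rw [fo, add_mulVec, one_mulVec, Lsgn_mulVec_self, gaugeMat]
  simp only [Pi.sub_apply, Pi.add_apply, mulVec_diagonal]
  ring

theorem Lu_mulVec_abs_apply_nonneg (ho : ∀ j, |o j| ≤ |o i|) : 0 ≤ (M.Lu *ᵥ |o|) i :=
  lapOf_mulVec_apply_nonneg M.Au_nonneg fun j => by simpa only [Pi.abs_apply] using ho j

theorem eq_zero_of_fx_eq_zero (hfx : M.fx x o = 0) (ho : o i ≤ 1/2) (hx : ∀ j, 0 ≤ x j)
    (hxi : x i = 0) (hB : 0 < M.B i j) : x j = 0 := by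
  have hterm_nonneg : ∀ k, 0 ≤ M.Bmat o i k * x k := fun k =>
    mul_nonneg ((M.Bmin_apply_nonneg i k).trans (M.Bmin_apply_le_Bmat_apply ho k)) (hx k)
  have hsum : ∑ k, M.Bmat o i k * x k = 0 := by
    simpa [fx_apply, hxi, mulVec, dotProduct] using congrFun hfx i
  have hterm := (Finset.sum_eq_zero_iff_of_nonneg fun k _ => hterm_nonneg k).1 hsum j
    (Finset.mem_univ j)
  have hBo : 0 < M.Bmat o i j :=
    (M.Bmin_apply_pos_of_B_apply_pos hB).trans_le (M.Bmin_apply_le_Bmat_apply ho j)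
  exact (mul_eq_zero.1 hterm).resolve_left hBo.ne'

theorem pos_of_fx_eq_zero (hfx : M.fx x o = 0) (ho : ∀ i, o i ≤ 1/2) (hx : ∀ i, 0 ≤ x i)
    (hx_ne : x ≠ 0) (i : Fin n) : 0 < x i := by
  refine (hx i).lt_of_ne' fun hxi => hx_ne (funext fun j => ?_)
  exact M.B_isIrreducible.forall_of_closed (P := fun k => x k = 0)
    (fun k l hk hB => M.eq_zero_of_fx_eq_zero hfx (ho k) hx hk hB) hxi j

theorem lt_one_of_fx_eq_zero (hfx : M.fx x o = 0) (ho : -(1/2) ≤ o i) (hx : x i ≤ 1) :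
    x i < 1 := by
  refine hx.lt_of_ne fun hxi => (M.Dmat_apply_self_pos ho).ne' ?_
  simpa [fx_apply, hxi] using congrFun hfx i

theorem neg_half_lt_of_fo_eq_zero (hfo : M.fo x o = 0) (ho : ∀ j, |o j| ≤ 1/2)
    (hx : 0 < x i) : -(1/2) < o i := by
  refine (abs_le.1 (ho i)).1.lt_of_ne fun hoi => ?_
  have hL := M.Lu_mulVec_abs_apply_nonneg (o := o) (i := i) fun j => by rw [← hoi]; norm_num [ho j]
  have h := congrFun hfo i
  rw [fo_apply, ← hoi, sgnm, if_neg (by norm_num), Pi.zero_apply] at h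
  linarith

theorem lt_half_of_fo_eq_zero (hfo : M.fo x o = 0) (ho : ∀ j, |o j| ≤ 1/2)
    (hx : x i < 1) : o i < 1/2 := by
  refine (abs_le.1 (ho i)).2.lt_of_ne fun hoi => ?_
  have hL := M.Lu_mulVec_abs_apply_nonneg (o := o) (i := i) fun j => by rw [hoi]; norm_num [ho j]
  have h := congrFun hfo i
  rw [fo_apply, hoi, sgnm, if_pos (by norm_num), Pi.zero_apply] at h
  linarith

end EpiOpModel

theorem endemic_equilibrium_interior_general {n : ℕ} (M : EpiOpModel n)
    (x o : Fin n → ℝ) (hbox : M.InBox x o) (heq : M.IsEquilibrium x o)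
    (hx_ne : x ≠ 0) :
    (∀ i, 0 < x i ∧ x i < 1) ∧ (∀ i, -(1/2) < o i ∧ o i < 1/2) := by
  obtain ⟨hx_mem, ho_mem⟩ := hbox
  obtain ⟨hfx, hfo⟩ := heq
  have ho_abs : ∀ j, |o j| ≤ 1/2 := fun j => abs_le.2 (ho_mem j)
  have hx_pos := M.pos_of_fx_eq_zero hfx (fun i => (ho_mem i).2) (fun i => (hx_mem i).1) hx_ne
  have hx_lt_one i := M.lt_one_of_fx_eq_zero hfx (ho_mem i).1 (hx_mem i).2
  exact ⟨fun i => ⟨hx_pos i, hx_lt_one i⟩, fun i =>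
    ⟨M.neg_half_lt_of_fo_eq_zero hfo ho_abs (hx_pos i),
      M.lt_half_of_fo_eq_zero hfo ho_abs (hx_lt_one i)⟩⟩

/-- Lemma 6: if `(x*, o*)` is an endemic equilibrium
(`x* ≥ 0`, `x* ≠ 0`), then `0 ≪ x* ≪ e` and `−0.5e ≪ o* ≪ 0.5e`
(strict entrywise inequalities). -/
theorem endemic_equilibrium_interior {n : ℕ} (M : EpiOpModel n)
    (x o : Fin n → ℝ) (hbox : M.InBox x o) (heq : M.IsEquilibrium x o)
    (hx_nonneg : ∀ i, 0 ≤ x i) (hx_ne : x ≠ 0) :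
    (∀ i, 0 < x i ∧ x i < 1) ∧ (∀ i, -(1/2) < o i ∧ o i < 1/2) :=
  endemic_equilibrium_interior_general M x o hbox heq hx_ne
end
end

section
/- Existence of a threshold opinion vector: if R_min = ρ(D^{−1} B_min) < 1 and R_max = ρ(D_min^{−1} B) > 1, then there exists at least one opinion vector ō ∈ [−0.5, 0.5]^n such that R^{ō} = ρ(D(ō)^{−1} B(ō)) = 1. -/
open Matrix Filter Set

noncomputable section

/-! Along the diagonal path `o = c • 𝟙`, `c ∈ [-1/2, 1/2]`, the reproduction number runs from
`R_max` (at `c = -1/2`) down to `R_min` (at `c = 1/2`), so the intermediate value theorem yields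
the threshold once `o ↦ R^o` is continuous on the box. Row `i` of `D(o)⁻¹ B(o)` depends on `o`
only through `o i`, as a ratio of affine functions bounded below by `β_min` (on edges) and
`δ_min`; hence `|A(o)| ≤ exp (K ‖o - o'‖) • A(o')` entrywise. By Gelfand's formula an entrywise
bound `|A| ≤ c • B` gives `ρ(A) ≤ c ρ(B)`, which squeezes `R^o` between
`exp (∓K ‖o - o'‖) R^{o'}`. -/

theorem exists_abs_le_mul {ι : Type*} [Finite ι] (f : ι → ℝ) {m : ℝ} (hm : 0 < m) :
    ∃ K, ∀ i, |f i| ≤ K * m := by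
  obtain ⟨C, hC⟩ := (Set.finite_range fun i => |f i|).bddAbove
  exact ⟨C / m, fun i => by rw [div_mul_cancel₀ _ hm.ne']; exact hC ⟨i, rfl⟩⟩

theorem le_exp_mul_of_eq_add_mul {u v b t m K r : ℝ} (hm : 0 < m) (hmv : m ≤ v)
    (hb : |b| ≤ K * m) (ht : |t| ≤ r) (hu : u = v + b * t) : u ≤ Real.exp (K * r) * v := by
  have hK : 0 ≤ K := nonneg_of_mul_nonneg_left ((abs_nonneg b).trans hb) hm
  have hbv : |b| ≤ K * v := hb.trans (mul_le_mul_of_nonneg_left hmv hK)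
  calc u ≤ v + |b| * |t| := by rw [hu, ← abs_mul]; gcongr; exact le_abs_self _
    _ ≤ v + (K * v) * r := by gcongr; exact (abs_nonneg b).trans hbv
    _ = (K * r + 1) * v := by ring
    _ ≤ Real.exp (K * r) * v := by gcongr; linarith; exact Real.add_one_le_exp _

open Topology in
theorem continuousOn_of_le_exp_mul_dist {X : Type*} [PseudoMetricSpace X] {g : X → ℝ}
    {s : Set X} {K : ℝ} (h : ∀ x ∈ s, ∀ y ∈ s, g x ≤ Real.exp (K * dist x y) * g y) :
    ContinuousOn g s := by
  intro y hy
  have hexp : ∀ a : ℝ, Tendsto (fun x => Real.exp (a * dist x y) * g y) (𝓝[s] y) (𝓝 (g y)) := by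
    intro a
    have hc : Continuous fun x => Real.exp (a * dist x y) * g y := by fun_prop
    simpa using (hc.tendsto y).mono_left nhdsWithin_le_nhds
  refine tendsto_of_tendsto_of_tendsto_of_le_of_le' (hexp (-K)) (hexp K) ?_ ?_
  · filter_upwards [self_mem_nhdsWithin] with x hx
    rw [neg_mul, Real.exp_neg, inv_mul_le_iff₀ (Real.exp_pos _), dist_comm]
    exact h y hy x hx
  · filter_upwards [self_mem_nhdsWithin] with x hx using h x hx y hy

namespace Matrix

variable {m α : Type*} [Fintype m]

theorem abs_pow_apply_le [DecidableEq m] {A B : Matrix m m ℝ} {c : ℝ}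
    (h : ∀ i j, |A i j| ≤ c * B i j) (k : ℕ) (i j : m) :
    |(A ^ k) i j| ≤ c ^ k * (B ^ k) i j := by
  induction k generalizing j with
  | zero => by_cases hij : i = j <;> simp [hij]
  | succ k ih =>
    rw [pow_succ A, pow_succ B, mul_apply, mul_apply, Finset.mul_sum]
    refine (Finset.abs_sum_le_sum_abs _ _).trans (Finset.sum_le_sum fun l _ => ?_)
    calc |(A ^ k) i l * A l j| = |(A ^ k) i l| * |A l j| := abs_mul _ _
      _ ≤ (c ^ k * (B ^ k) i l) * (c * B l j) :=
        mul_le_mul (ih l) (h l j) (abs_nonneg _) ((abs_nonneg _).trans (ih l))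
      _ = c ^ (k + 1) * ((B ^ k) i l * B l j) := by ring

attribute [local instance] Matrix.linftyOpSeminormedAddCommGroup in
theorem linfty_opNNNorm_le_mul_of_nnnorm_apply_le {n : Type*} [Fintype n]
    [SeminormedAddCommGroup α] {A B : Matrix m n α} {d : NNReal}
    (h : ∀ i j, ‖A i j‖₊ ≤ d * ‖B i j‖₊) : ‖A‖₊ ≤ d * ‖B‖₊ := by
  rw [linfty_opNNNorm_def, linfty_opNNNorm_def, NNReal.mul_finset_sup]
  refine Finset.sup_mono_fun fun i _ => ?_
  rw [Finset.mul_sum]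
  exact Finset.sum_le_sum fun j _ => h i j

theorem inv_diagonal_mul_apply {n K : Type*} [Fintype n] [DecidableEq n] [Field K]
    {v : n → K} (hv : ∀ i, v i ≠ 0) (N : Matrix n n K) (i j : n) :
    ((diagonal v)⁻¹ * N) i j = N i j / v i := by
  have hinv : (diagonal v)⁻¹ = diagonal v⁻¹ := by
    refine inv_eq_left_inv ?_
    rw [diagonal_mul_diagonal, ← diagonal_one]
    exact congrArg diagonal (funext fun i => inv_mul_cancel₀ (hv i))
  rw [hinv, diagonal_mul, Pi.inv_apply, inv_mul_eq_div]

end Matrix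

section SpectralRadius

attribute [local instance] Matrix.linftyOpNormedRing Matrix.linftyOpNormedAlgebra

variable {m : Type*} [Fintype m] [DecidableEq m]

open ENNReal in
theorem specRad_eq_toReal_spectralRadius (A : Matrix m m ℝ) :
    specRad A = (spectralRadius ℂ (A.map (algebraMap ℝ ℂ))).toReal := by
  rcases (spectrum ℂ (A.map (algebraMap ℝ ℂ))).eq_empty_or_nonempty with h | h
  · rw [specRad, spectralRadius, h]
    simp
  obtain ⟨z, hz, hzr⟩ := spectrum.exists_nnnorm_eq_spectralRadius_of_nonempty h
  rw [← hzr, coe_toReal, coe_nnnorm, specRad]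
  refine IsGreatest.csSup_eq ⟨⟨z, hz, rfl⟩, ?_⟩
  rintro _ ⟨w, hw, rfl⟩
  have : (‖w‖₊ : ℝ≥0∞) ≤ ‖z‖₊ := hzr ▸ le_iSup₂ (f := fun k _ => (‖k‖₊ : ℝ≥0∞)) w hw
  exact_mod_cast this

open ENNReal Topology in
theorem spectralRadius_map_le_mul {A B : Matrix m m ℝ} {c : NNReal}
    (h : ∀ i j, |A i j| ≤ c * B i j) :
    spectralRadius ℂ (A.map (algebraMap ℝ ℂ)) ≤
      c * spectralRadius ℂ (B.map (algebraMap ℝ ℂ)) := by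
  have hpow : ∀ k : ℕ,
      ‖(A.map (algebraMap ℝ ℂ)) ^ k‖₊ ≤ c ^ k * ‖(B.map (algebraMap ℝ ℂ)) ^ k‖₊ := by
    intro k
    rw [← RingHom.mapMatrix_apply, ← RingHom.mapMatrix_apply, ← map_pow, ← map_pow]
    refine Matrix.linfty_opNNNorm_le_mul_of_nnnorm_apply_le fun i j => ?_
    simp only [RingHom.mapMatrix_apply, Matrix.map_apply, Complex.coe_algebraMap,
      Complex.nnnorm_real, ← NNReal.coe_le_coe, NNReal.coe_mul, NNReal.coe_pow, coe_nnnorm,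
      Real.norm_eq_abs]
    exact (Matrix.abs_pow_apply_le h k i j).trans
      (mul_le_mul_of_nonneg_left (le_abs_self _) (by positivity))
  have hlim : Tendsto (fun k : ℕ => (c : ℝ≥0∞) *
      (‖(B.map (algebraMap ℝ ℂ)) ^ (k + 1)‖₊ : ℝ≥0∞) ^ (1 / (k + 1) : ℝ)) atTop
      (𝓝 (c * spectralRadius ℂ (B.map (algebraMap ℝ ℂ)))) := by
    refine ENNReal.Tendsto.const_mul ?_ (Or.inr coe_ne_top)
    have := (spectrum.pow_nnnorm_pow_one_div_tendsto_nhds_spectralRadius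
      (B.map (algebraMap ℝ ℂ))).comp (tendsto_add_atTop_nat 1)
    simpa [Function.comp_def] using this
  have hone : ‖(1 : Matrix m m ℂ)‖₊ ≤ 1 := by
    rw [← Matrix.diagonal_one, Matrix.linfty_opNNNorm_diagonal]
    exact (pi_nnnorm_const_le 1).trans nnnorm_one.le
  refine ge_of_tendsto' hlim fun k => ?_
  have hk : (0 : ℝ) < 1 / (k + 1 : ℝ) := by positivity
  calc spectralRadius ℂ (A.map (algebraMap ℝ ℂ))
      ≤ (‖(A.map (algebraMap ℝ ℂ)) ^ (k + 1)‖₊ : ℝ≥0∞) ^ (1 / (k + 1) : ℝ) := by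
        refine (spectrum.spectralRadius_le_pow_nnnorm_pow_one_div ℂ _ k).trans
          (mul_le_of_le_one_right' (ENNReal.rpow_le_one (by exact_mod_cast hone) hk.le))
    _ ≤ ((c ^ (k + 1) * ‖(B.map (algebraMap ℝ ℂ)) ^ (k + 1)‖₊ : NNReal) : ℝ≥0∞) ^
          (1 / (k + 1) : ℝ) :=
        ENNReal.rpow_le_rpow (by exact_mod_cast hpow (k + 1)) hk.le
    _ = c * (‖(B.map (algebraMap ℝ ℂ)) ^ (k + 1)‖₊ : ℝ≥0∞) ^ (1 / (k + 1) : ℝ) := by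
        rw [coe_mul, ENNReal.mul_rpow_of_nonneg _ _ hk.le, coe_pow, ← ENNReal.rpow_natCast,
          ← ENNReal.rpow_mul, Nat.cast_add_one, mul_one_div_cancel (by positivity),
          ENNReal.rpow_one]

open ENNReal in
theorem specRad_le_mul_of_abs_le {A B : Matrix m m ℝ} {c : ℝ} (hc : 0 ≤ c)
    (h : ∀ i j, |A i j| ≤ c * B i j) : specRad A ≤ c * specRad B := by
  lift c to NNReal using hc
  have hfin : spectralRadius ℂ (B.map (algebraMap ℝ ℂ)) ≠ ⊤ :=
    ((spectrum.spectralRadius_le_pow_nnnorm_pow_one_div ℂ _ 0).trans_lt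
      (by simpa using mul_lt_top coe_lt_top coe_lt_top)).ne
  rw [specRad_eq_toReal_spectralRadius, specRad_eq_toReal_spectralRadius, ← coe_toReal,
    ← toReal_mul]
  exact toReal_mono (mul_ne_top coe_ne_top hfin) (spectralRadius_map_le_mul h)

end SpectralRadius

namespace EpiOpModel

variable {n : ℕ} (M : EpiOpModel n)

def opinionBox (n : ℕ) : Set (Fin n → ℝ) := {o | ∀ i, o i ∈ Icc (-(1/2) : ℝ) (1/2)}

def healingRate (o : Fin n → ℝ) (i : Fin n) : ℝ := M.δmin + (M.δ i - M.δmin) * (o i + 1/2)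

def nextGen (o : Fin n → ℝ) : Matrix (Fin n) (Fin n) ℝ := (M.Dmat o)⁻¹ * M.Bmat o

variable {M}

theorem δmin_le_healingRate {o : Fin n → ℝ} {i : Fin n} (hoi : -(1/2) ≤ o i) :
    M.δmin ≤ M.healingRate o i :=
  le_add_of_nonneg_right (mul_nonneg (sub_nonneg.2 (M.δ_ge i)) (by linarith))

theorem βmin_le_Bmat {o : Fin n → ℝ} {i j : Fin n} (hoi : o i ≤ 1/2) (hij : M.Atil i j = 1) :
    M.βmin ≤ M.Bmat o i j := by
  have hB := M.B_edge i j hij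
  have hs : 0 ≤ 1/2 - o i := by linarith
  calc M.βmin ≤ M.βmin + (1/2 - o i) * (M.B i j - M.βmin) :=
        le_add_of_nonneg_right (mul_nonneg hs (by linarith))
    _ = M.Bmat o i j := by
      simp only [Bmat, Bmin, of_apply, Matrix.smul_apply, smul_eq_mul, hij]; ring

theorem Bmat_nonneg {o : Fin n → ℝ} {i : Fin n} (hoi : o i ≤ 1/2) (j : Fin n) :
    0 ≤ M.Bmat o i j := by
  rcases M.Atil_01 i j with hij | hij
  · simp [Bmat, Bmin, hij, M.B_off i j hij]
  · exact M.βmin_pos.le.trans (βmin_le_Bmat hoi hij)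

theorem nextGen_apply {o : Fin n → ℝ} (ho : ∀ i, -(1/2) ≤ o i) (i j : Fin n) :
    M.nextGen o i j = M.Bmat o i j / M.healingRate o i :=
  inv_diagonal_mul_apply (fun i => (M.δmin_pos.trans_le (δmin_le_healingRate (ho i))).ne') _ i j

theorem healingRate_le_exp_mul {K r : ℝ} (hK : ∀ i, |M.δ i - M.δmin| ≤ K * M.δmin)
    {o o' : Fin n → ℝ} {i : Fin n} (ho' : -(1/2) ≤ o' i) (hr : |o i - o' i| ≤ r) :
    M.healingRate o i ≤ Real.exp (K * r) * M.healingRate o' i :=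
  le_exp_mul_of_eq_add_mul M.δmin_pos (δmin_le_healingRate ho') (hK i) hr
    (by simp only [healingRate]; ring)

theorem Bmat_le_exp_mul {K r : ℝ} (hK : ∀ i j, |M.βmin - M.B i j| ≤ K * M.βmin)
    {o o' : Fin n → ℝ} {i : Fin n} (ho' : o' i ≤ 1/2) (hr : |o i - o' i| ≤ r) (j : Fin n) :
    M.Bmat o i j ≤ Real.exp (K * r) * M.Bmat o' i j := by
  rcases M.Atil_01 i j with hij | hij
  · simp [Bmat, Bmin, hij, M.B_off i j hij]
  · exact le_exp_mul_of_eq_add_mul M.βmin_pos (βmin_le_Bmat ho' hij) (hK i j) hr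
      (by simp only [Bmat, Bmin, of_apply, Matrix.smul_apply, smul_eq_mul, hij]; ring)

variable (M)

theorem exists_abs_nextGen_apply_le :
    ∃ K, ∀ o ∈ opinionBox n, ∀ o' ∈ opinionBox n, ∀ i j,
      |M.nextGen o i j| ≤ Real.exp (K * dist o o') * M.nextGen o' i j := by
  obtain ⟨Kβ, hKβ⟩ :=
    exists_abs_le_mul (fun p : Fin n × Fin n => M.βmin - M.B p.1 p.2) M.βmin_pos
  obtain ⟨Kδ, hKδ⟩ := exists_abs_le_mul (fun i => M.δ i - M.δmin) M.δmin_pos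
  refine ⟨Kβ + Kδ, fun o ho o' ho' i j => ?_⟩
  have hr : |o i - o' i| ≤ dist o o' := by simpa [Real.dist_eq] using dist_le_pi_dist o o' i
  have hd := M.δmin_pos.trans_le (δmin_le_healingRate (ho i).1)
  have hd' := M.δmin_pos.trans_le (δmin_le_healingRate (ho' i).1)
  have hB := Bmat_le_exp_mul (fun i j => hKβ (i, j)) (ho' i).2 hr j
  have hD := healingRate_le_exp_mul hKδ (ho i).1 ((abs_sub_comm _ _).trans_le hr)
  rw [nextGen_apply (fun i => (ho i).1), nextGen_apply (fun i => (ho' i).1),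
    abs_of_nonneg (div_nonneg (Bmat_nonneg (ho i).2 j) hd.le), mul_div_assoc',
    div_le_div_iff₀ hd hd', add_mul, Real.exp_add]
  calc M.Bmat o i j * M.healingRate o' i
      ≤ (Real.exp (Kβ * dist o o') * M.Bmat o' i j) *
        (Real.exp (Kδ * dist o o') * M.healingRate o i) :=
        mul_le_mul hB hD hd'.le (by have := Bmat_nonneg (M := M) (ho' i).2 j; positivity)
    _ = _ := by ring

theorem continuousOn_Rnum : ContinuousOn M.Rnum (opinionBox n) := by
  obtain ⟨K, hK⟩ := M.exists_abs_nextGen_apply_le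
  exact continuousOn_of_le_exp_mul_dist fun o ho o' ho' =>
    specRad_le_mul_of_abs_le (Real.exp_pos _).le (hK o ho o' ho')

theorem Rnum_const_neg_half : M.Rnum (fun _ => -(1/2)) = M.Rmax := by
  have hD : M.Dmat (fun _ => -(1/2)) = M.Dmin := by
    rw [Dmin, smul_one_eq_diagonal, Dmat]
    congr 1; funext i; ring
  have hB : M.Bmat (fun _ => -(1/2)) = M.B := by
    ext i j; simp [Bmat]
  rw [Rnum, Rmax, hD, hB]

theorem Rnum_const_half : M.Rnum (fun _ => 1/2) = M.Rmin := by
  have hD : M.Dmat (fun _ => 1/2) = M.Dmax := by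
    rw [Dmax, Dmat]
    congr 1; funext i; ring
  have hB : M.Bmat (fun _ => 1/2) = M.Bmin := by
    ext i j; simp only [Bmat, of_apply]; ring
  rw [Rnum, Rmin, hD, hB]

end EpiOpModel

/-- Corollary 3, existence of a threshold opinion vector: if
`R_min < 1` and `R_max > 1`, there exists `ō ∈ [−0.5, 0.5]^n` with
`R^{ō} = 1`. -/
theorem threshold_opinion_vector_exists {n : ℕ} (M : EpiOpModel n)
    (hRmin : M.Rmin < 1) (hRmax : 1 < M.Rmax) :
    ∃ ob : Fin n → ℝ, (∀ i, ob i ∈ Set.Icc (-(1/2) : ℝ) (1/2)) ∧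
      M.Rnum ob = 1 := by
  have hcont : ContinuousOn (fun c : ℝ => M.Rnum fun _ => c) (Icc (-(1/2)) (1/2)) :=
    M.continuousOn_Rnum.comp (continuous_pi fun _ => continuous_id).continuousOn
      fun _ hc _ => hc
  obtain ⟨c, hc, hRc⟩ := intermediate_value_Icc' (by norm_num) hcont
    ⟨M.Rnum_const_half ▸ hRmin.le, M.Rnum_const_neg_half ▸ hRmax.le⟩
  exact ⟨fun _ => c, fun _ => hc, hRc⟩
end
end
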